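/- For every construction G with root graph D and every X in {W,E}: if D has at least two X-edges, then NX(G) ≠ SX(G). -/
import Mathlib


namespace PluralCuts

/-- The two horizontal directions: west and east. -/
inductive XDir : Type
  | W
  | E
deriving DecidableEq

/-- The two vertical directions: north and south. -/
inductive YDir : Type
  | N
  | S
deriving DecidableEq

/-- The other element of `{W, E}`. -/
def XDir.other : XDir → XDir
  | .W => .E
  | .E => .W

/-- A helper choosing between two values according to an `XDir`. -/
def pick {α : Type*} (w e : α) : XDir → α
  | .W => w
  | .E => e

/-- A digraph on (a finite set of) natural-number vertices: a finite set of
vertices together with a finite set of edges (ordered pairs). -/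
structure DG : Type where
  verts : Finset ℕ
  edges : Finset (ℕ × ℕ)

namespace DG

/-- `D` is an oriented graph: edges lie between vertices, the edge relation is
irreflexive and antisymmetric, and the vertex set is nonempty. -/
def IsOriented (D : DG) : Prop :=
  (∀ e ∈ D.edges, e.1 ∈ D.verts ∧ e.2 ∈ D.verts) ∧
  (∀ e ∈ D.edges, e.1 ≠ e.2) ∧
  (∀ a b : ℕ, (a, b) ∈ D.edges → (b, a) ∉ D.edges) ∧
  D.verts.Nonempty

/-- A `W`-vertex: no edge ends in it. -/
def isWVert (D : DG) (a : ℕ) : Prop := a ∈ D.verts ∧ ∀ b, (b, a) ∉ D.edges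

/-- An `E`-vertex: no edge begins in it. -/
def isEVert (D : DG) (a : ℕ) : Prop := a ∈ D.verts ∧ ∀ b, (a, b) ∉ D.edges

/-- An inner vertex: some edge ends in it and some edge begins in it. -/
def isInner (D : DG) (a : ℕ) : Prop :=
  a ∈ D.verts ∧ (∃ b, (b, a) ∈ D.edges) ∧ (∃ b, (a, b) ∈ D.edges)

/-- A `W`-edge: an edge beginning in a `W`-vertex. -/
def isWEdge (D : DG) (e : ℕ × ℕ) : Prop := e ∈ D.edges ∧ D.isWVert e.1

/-- An `E`-edge: an edge ending in an `E`-vertex. -/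
def isEEdge (D : DG) (e : ℕ × ℕ) : Prop := e ∈ D.edges ∧ D.isEVert e.2

/-- An `X`-edge, for `X ∈ {W, E}`. -/
def isXEdge (D : DG) : XDir → (ℕ × ℕ) → Prop
  | .W => D.isWEdge
  | .E => D.isEEdge

/-- An inner edge: it begins and ends in inner vertices. -/
def isInnerEdge (D : DG) (e : ℕ × ℕ) : Prop :=
  e ∈ D.edges ∧ D.isInner e.1 ∧ D.isInner e.2

/-- A functional `W`-edge `(a,b)`: `(a,c) ∈ D` implies `b = c`. -/
def funcWEdge (D : DG) (e : ℕ × ℕ) : Prop :=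
  D.isWEdge e ∧ ∀ c, (e.1, c) ∈ D.edges → c = e.2

/-- A functional `E`-edge `(b,a)`: `(c,a) ∈ D` implies `b = c`. -/
def funcEEdge (D : DG) (e : ℕ × ℕ) : Prop :=
  D.isEEdge e ∧ ∀ c, (c, e.2) ∈ D.edges → c = e.1

/-- `D` is `W`-`E`-functional: all its `W`-edges and `E`-edges are functional. -/
def WEFunctional (D : DG) : Prop :=
  (∀ e, D.isWEdge e → D.funcWEdge e) ∧ (∀ e, D.isEEdge e → D.funcEEdge e)

/-- Semi-adjacency: `(a,b)` or `(b,a)` is an edge. -/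
def semiAdj (D : DG) (a b : ℕ) : Prop := (a, b) ∈ D.edges ∨ (b, a) ∈ D.edges

/-- A semipath: a nonempty sequence of mutually distinct vertices in which any
two consecutive vertices are semi-adjacent. -/
def IsSemipath (D : DG) (l : List ℕ) : Prop :=
  l ≠ [] ∧ (∀ a ∈ l, a ∈ D.verts) ∧ l.Nodup ∧ l.Chain' D.semiAdj

/-- A path: a nonempty sequence of mutually distinct vertices in which
`(a_i, a_{i+1})` is an edge for consecutive vertices. -/
def IsPath (D : DG) (l : List ℕ) : Prop :=
  l ≠ [] ∧ (∀ a ∈ l, a ∈ D.verts) ∧ l.Nodup ∧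
    l.Chain' (fun a b => (a, b) ∈ D.edges)

/-- A semicycle: a sequence `a_1, ..., a_n` of vertices with `n ≥ 4`,
`a_1 = a_n`, `a_1, ..., a_{n-1}` mutually distinct, and consecutive vertices
semi-adjacent. -/
def IsSemicycle (D : DG) (l : List ℕ) : Prop :=
  4 ≤ l.length ∧ (∀ a ∈ l, a ∈ D.verts) ∧ l.head? = l.getLast? ∧
  l.dropLast.Nodup ∧ l.Chain' D.semiAdj

/-- `D` is weakly connected: every two vertices are joined by a semipath. -/
def WeaklyConnected (D : DG) : Prop :=
  ∀ a ∈ D.verts, ∀ b ∈ D.verts,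
    ∃ l, D.IsSemipath l ∧ l.head? = some a ∧ l.getLast? = some b

/-- `D` is asemicyclic: it has no semicycles. -/
def Asemicyclic (D : DG) : Prop := ∀ l, ¬ D.IsSemicycle l

/-- The cut `D_W[e_W - e_E]D_E`:
`(D_W - {e_W}) ∪ (D_E - {e_E}) ∪ {(e_W.1, e_E.2)}` on the union of the vertex
sets with `e_W.2` and `e_E.1` omitted. -/
def cut (DW DE : DG) (eW eE : ℕ × ℕ) : DG where
  verts := (DW.verts ∪ DE.verts) \ {eW.2, eE.1}
  edges := insert (eW.1, eE.2) ((DW.edges.erase eW) ∪ (DE.edges.erase eE))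

end DG

/-- The type of assignments of four distinguished edges `NW, SW, NE, SE`. -/
abbrev DistE : Type := YDir → XDir → ℕ × ℕ

/-- The type of labellings assigning to (inner) vertices four edges. -/
abbrev Lab : Type := ℕ → YDir → XDir → ℕ × ℕ

/-- `⟨D, ε⟩` is a basic K-graph: `D` is an oriented graph with a single inner
vertex `b`, all edges begin or end in `b`, every other vertex is joined to `b`
by an edge, there is at least one edge ending in `b` and one beginning in `b`,
the distinguished edges `ε Y W` end in `b` and `ε Y E` begin in `b`, and
(XYB): if there are at least two `X`-edges then `NX ≠ SX`. -/
def IsBasicK (D : DG) (ε : DistE) : Prop :=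
  D.IsOriented ∧
  ∃ b ∈ D.verts,
    (∀ e ∈ D.edges, e.1 = b ∨ e.2 = b) ∧
    (∀ v ∈ D.verts, v = b ∨ (v, b) ∈ D.edges ∨ (b, v) ∈ D.edges) ∧
    (∃ a, (a, b) ∈ D.edges) ∧ (∃ c, (b, c) ∈ D.edges) ∧
    (∀ Y : YDir, ε Y XDir.W ∈ D.edges ∧ (ε Y XDir.W).2 = b ∧
      ε Y XDir.E ∈ D.edges ∧ (ε Y XDir.E).1 = b) ∧
    (2 ≤ (D.edges.filter (fun e => e.2 = b)).card →
      ε YDir.N XDir.W ≠ ε YDir.S XDir.W) ∧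
    (2 ≤ (D.edges.filter (fun e => e.1 = b)).card →
      ε YDir.N XDir.E ≠ ε YDir.S XDir.E)

/-- `⟨D, ε⟩` is a basic Q-graph: as a basic K-graph but with no requirement
(XYB) on the distinguished edges. -/
def IsBasicQ (D : DG) (ε : DistE) : Prop :=
  D.IsOriented ∧
  ∃ b ∈ D.verts,
    (∀ e ∈ D.edges, e.1 = b ∨ e.2 = b) ∧
    (∀ v ∈ D.verts, v = b ∨ (v, b) ∈ D.edges ∨ (b, v) ∈ D.edges) ∧
    (∃ a, (a, b) ∈ D.edges) ∧ (∃ c, (b, c) ∈ D.edges) ∧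
    (∀ Y : YDir, ε Y XDir.W ∈ D.edges ∧ (ε Y XDir.W).2 = b ∧
      ε Y XDir.E ∈ D.edges ∧ (ε Y XDir.E).1 = b)

/-- Finite binary trees whose nodes carry an oriented graph, four
distinguished edges, and (at internal nodes) the two cut edges. -/
inductive CTree : Type
  | leaf (D : DG) (ε : DistE)
  | node (D : DG) (ε : DistE) (eW eE : ℕ × ℕ) (l r : CTree)

namespace CTree

/-- The graph at the root of the tree. -/
def rootGraph : CTree → DG
  | .leaf D _ => D
  | .node D _ _ _ _ _ => D

/-- The distinguished edges at the root of the tree. -/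
def dist : CTree → DistE
  | .leaf _ ε => ε
  | .node _ ε _ _ _ _ => ε

/-- The list of graphs-with-distinguished-edges at the leaves of the tree
(the basic K-graphs determining the leaves of a construction). -/
def leaves : CTree → List (DG × DistE)
  | .leaf D ε => [(D, ε)]
  | .node _ _ _ _ l r => l.leaves ++ r.leaves

end CTree

/-- The tree `G_W[e_W - e_E]G_E`, whose root graph is the cut of the root
graphs and whose distinguished edges are given by (XYD). -/
def mkNode (GW GE : CTree) (eW eE : ℕ × ℕ) : CTree :=
  .node (DG.cut GW.rootGraph GE.rootGraph eW eE)
    (fun Y X =>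
      match X with
      | .W => if eE = GE.dist Y XDir.W then GW.dist Y XDir.W else GE.dist Y XDir.W
      | .E => if eW = GW.dist Y XDir.E then GE.dist Y XDir.E else GW.dist Y XDir.E)
    eW eE GW GE

/-- The inductive notion of construction (of a global K-graph). -/
inductive IsConstruction : CTree → Prop
  | leaf (D : DG) (ε : DistE) (h : IsBasicK D ε) : IsConstruction (.leaf D ε)
  | node (D : DG) (ε : DistE) (eW eE : ℕ × ℕ) (GW GE : CTree)
      (hW : IsConstruction GW) (hE : IsConstruction GE)
      (hdisj : Disjoint GW.rootGraph.verts GE.rootGraph.verts)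
      (heW : GW.rootGraph.funcEEdge eW)
      (heE : GE.rootGraph.funcWEdge eE)
      (hD : D = DG.cut GW.rootGraph GE.rootGraph eW eE)
      (hXYC : ∀ Y : YDir, eW = GW.dist Y XDir.E ∨ eE = GE.dist Y XDir.W)
      (hεW : ∀ Y : YDir, ε Y XDir.W =
        if eE = GE.dist Y XDir.W then GW.dist Y XDir.W else GE.dist Y XDir.W)
      (hεE : ∀ Y : YDir, ε Y XDir.E =
        if eW = GW.dist Y XDir.E then GE.dist Y XDir.E else GW.dist Y XDir.E) :
      IsConstruction (.node D ε eW eE GW GE)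

/-- The inductive notion of construction of a global Q-graph: as
`IsConstruction` but with basic Q-graphs at the leaves. -/
inductive IsConstructionQ : CTree → Prop
  | leaf (D : DG) (ε : DistE) (h : IsBasicQ D ε) : IsConstructionQ (.leaf D ε)
  | node (D : DG) (ε : DistE) (eW eE : ℕ × ℕ) (GW GE : CTree)
      (hW : IsConstructionQ GW) (hE : IsConstructionQ GE)
      (hdisj : Disjoint GW.rootGraph.verts GE.rootGraph.verts)
      (heW : GW.rootGraph.funcEEdge eW)
      (heE : GE.rootGraph.funcWEdge eE)
      (hD : D = DG.cut GW.rootGraph GE.rootGraph eW eE)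
      (hXYC : ∀ Y : YDir, eW = GW.dist Y XDir.E ∨ eE = GE.dist Y XDir.W)
      (hεW : ∀ Y : YDir, ε Y XDir.W =
        if eE = GE.dist Y XDir.W then GW.dist Y XDir.W else GE.dist Y XDir.W)
      (hεE : ∀ Y : YDir, ε Y XDir.E =
        if eW = GW.dist Y XDir.E then GE.dist Y XDir.E else GW.dist Y XDir.E) :
      IsConstructionQ (.node D ε eW eE GW GE)

/-- ρ-equivalence of constructions: the least equivalence relation containing
ρ1, ρ2, ρ3 and closed under congruence with respect to cuts. -/
inductive RhoEquiv : CTree → CTree → Prop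
  | rho1 (P Q R : CTree) (eW eE fW fE : ℕ × ℕ)
      (hP : IsConstruction P) (hQ : IsConstruction Q) (hR : IsConstruction R)
      (heW : P.rootGraph.isEEdge eW) (hfW : Q.rootGraph.isEEdge fW)
      (heE : Q.rootGraph.isWEdge eE) (hfE : R.rootGraph.isWEdge fE)
      (h1 : IsConstruction (mkNode (mkNode P Q eW eE) R fW fE))
      (h2 : IsConstruction (mkNode P (mkNode Q R fW fE) eW eE)) :
      RhoEquiv (mkNode (mkNode P Q eW eE) R fW fE)
               (mkNode P (mkNode Q R fW fE) eW eE)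
  | rho2 (P Q R : CTree) (eW eE fW fE : ℕ × ℕ)
      (hP : IsConstruction P) (hQ : IsConstruction Q) (hR : IsConstruction R)
      (heW : P.rootGraph.isEEdge eW) (hfW : P.rootGraph.isEEdge fW)
      (hne : eW ≠ fW)
      (heE : Q.rootGraph.isWEdge eE) (hfE : R.rootGraph.isWEdge fE)
      (h1 : IsConstruction (mkNode (mkNode P Q eW eE) R fW fE))
      (h2 : IsConstruction (mkNode (mkNode P R fW fE) Q eW eE)) :
      RhoEquiv (mkNode (mkNode P Q eW eE) R fW fE)
               (mkNode (mkNode P R fW fE) Q eW eE)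
  | rho3 (P Q R : CTree) (eW eE fW fE : ℕ × ℕ)
      (hP : IsConstruction P) (hQ : IsConstruction Q) (hR : IsConstruction R)
      (heE : P.rootGraph.isWEdge eE) (hfE : P.rootGraph.isWEdge fE)
      (hne : eE ≠ fE)
      (heW : Q.rootGraph.isEEdge eW) (hfW : R.rootGraph.isEEdge fW)
      (h1 : IsConstruction (mkNode R (mkNode Q P eW eE) fW fE))
      (h2 : IsConstruction (mkNode Q (mkNode R P fW fE) eW eE)) :
      RhoEquiv (mkNode R (mkNode Q P eW eE) fW fE)
               (mkNode Q (mkNode R P fW fE) eW eE)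
  | congr (G1 G2 H1 H2 : CTree) (eW eE : ℕ × ℕ)
      (h12 : RhoEquiv G1 G2) (h34 : RhoEquiv H1 H2)
      (hc1 : IsConstruction (mkNode G1 H1 eW eE))
      (hc2 : IsConstruction (mkNode G2 H2 eW eE)) :
      RhoEquiv (mkNode G1 H1 eW eE) (mkNode G2 H2 eW eE)
  | refl (G : CTree) (h : IsConstruction G) : RhoEquiv G G
  | symm {G H : CTree} (h : RhoEquiv G H) : RhoEquiv H G
  | trans {G H K : CTree} (h1 : RhoEquiv G H) (h2 : RhoEquiv H K) :
      RhoEquiv G K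

/-- The class `[G]`: all constructions with the same root graph as `G` whose
leaves are determined by the same basic K-graphs as those of `G`. -/
def classOf (G : CTree) : Set CTree :=
  {H | IsConstruction H ∧ H.rootGraph = G.rootGraph ∧
    ∀ p : DG × DistE, p ∈ H.leaves ↔ p ∈ G.leaves}

/-- Renaming the vertices of a digraph along a function. -/
def DG.rename (f : ℕ → ℕ) (D : DG) : DG where
  verts := D.verts.image f
  edges := D.edges.image (fun e => (f e.1, f e.2))

/-- Renaming the vertices throughout a tree. -/
def CTree.rename (f : ℕ → ℕ) : CTree → CTree
  | .leaf D ε => .leaf (DG.rename f D) (fun Y X => (f (ε Y X).1, f (ε Y X).2))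
  | .node D ε eW eE l r =>
      .node (DG.rename f D) (fun Y X => (f (ε Y X).1, f (ε Y X).2))
        (f eW.1, f eW.2) (f eE.1, f eE.2) (l.rename f) (r.rename f)

/-- σ-equivalence: `H` is obtained from `G` by a bijective renaming of
vertices that fixes the root vertices (so only secondary vertices may be
renamed). -/
def SigmaEquiv (G H : CTree) : Prop :=
  ∃ f : ℕ ≃ ℕ, (∀ v ∈ G.rootGraph.verts, f v = v) ∧ H = G.rename f

/-- The global compass graph `‖G‖`: all constructions σ-equivalent to a
construction in `[G]`. -/
def normClass (G : CTree) : Set CTree :=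
  {H | ∃ K ∈ classOf G, SigmaEquiv K H}

/-- The labelling `L` of `λ(G) = ⟨D, L⟩`, defined by induction on `G`: at a
leaf given by a basic K-graph with inner vertex `b`, `YX(b) = YX(B)`; at a
node, the value is inherited from the appropriate subtree unless it is one of
the two cut edges, in which case it is the new edge introduced by the cut. -/
def lamG : CTree → Lab
  | .leaf _ ε => fun _ => ε
  | .node _ _ eW eE l r => fun a Y X =>
      let v := if a ∈ l.rootGraph.verts then lamG l a Y X else lamG r a Y X
      if v = eW ∨ v = eE then (eW.1, eE.2) else v

/-- `L` assigns to every inner vertex `a` edges `L a Y W` ending in `a` and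
edges `L a Y E` beginning in `a`. -/
def ProperLab (D : DG) (L : Lab) : Prop :=
  ∀ a, D.isInner a → ∀ Y : YDir,
    L a Y XDir.W ∈ D.edges ∧ (L a Y XDir.W).2 = a ∧
    L a Y XDir.E ∈ D.edges ∧ (L a Y XDir.E).1 = a

/-- `⟨D, L⟩` separates `N` from `S`. -/
def SeparatesNS (D : DG) (L : Lab) : Prop :=
  ∀ a, D.isInner a →
    (2 ≤ (D.edges.filter (fun e => e.2 = a)).card →
      L a YDir.N XDir.W ≠ L a YDir.S XDir.W) ∧
    (2 ≤ (D.edges.filter (fun e => e.1 = a)).card →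
      L a YDir.N XDir.E ≠ L a YDir.S XDir.E)

/-- A list `a_1, ..., a_n` is `Y`-decent in `⟨D, L⟩`: `n = 1`, or
`YE(a_1) = (a_1, a_2)`, or `YW(a_n) = (a_{n-1}, a_n)`. -/
def Ydecent (L : Lab) (Y : YDir) (l : List ℕ) : Prop :=
  ∀ a b t, l = a :: b :: t →
    (L a Y XDir.E = (a, b) ∨
      ∃ c d t', l.reverse = d :: c :: t' ∧ L d Y XDir.W = (c, d))

/-- `⟨D, L⟩` is a local compass graph. -/
def IsLocalCompass (D : DG) (L : Lab) : Prop :=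
  D.IsOriented ∧ ProperLab D L ∧
  D.WeaklyConnected ∧ D.Asemicyclic ∧ D.WEFunctional ∧ (∃ a, D.isInner a) ∧
  SeparatesNS D L ∧
  (∀ l, D.IsPath l → Ydecent L YDir.N l ∧ Ydecent L YDir.S l)

/-- A path (list) covers an edge `g` when `g` is a pair of consecutive
vertices of the list. -/
def covers (l : List ℕ) (g : ℕ × ℕ) : Prop := g ∈ l.zip l.tail

/-- A `YX`-edge in `⟨D, L⟩`. -/
def YXedge (D : DG) (L : Lab) (Y : YDir) : XDir → (ℕ × ℕ) → Prop
  | .W, g => g ∈ D.edges ∧ (L g.2 Y XDir.W = g ∨ D.isEEdge g)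
  | .E, g => g ∈ D.edges ∧ (L g.1 Y XDir.E = g ∨ D.isWEdge g)

/-- A proper semipath: a semipath such that neither it nor its reverse is a
path. -/
def ProperSemipath (D : DG) (l : List ℕ) : Prop :=
  D.IsSemipath l ∧ ¬ D.IsPath l ∧ ¬ D.IsPath l.reverse

/-- A transversal edge `(a,b)`: there is a proper semipath beginning with
`a, b` and a proper semipath beginning with `b, a`. -/
def Transversal (D : DG) (e : ℕ × ℕ) : Prop :=
  e ∈ D.edges ∧
  (∃ t, ProperSemipath D (e.1 :: e.2 :: t)) ∧
  (∃ t, ProperSemipath D (e.2 :: e.1 :: t))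

/-- The edge of `D` that connects two semi-adjacent vertices `a` and `b`. -/
def connEdge (D : DG) (a b : ℕ) : ℕ × ℕ :=
  if (a, b) ∈ D.edges then (a, b) else (b, a)

/-- The connecting edges of a list: the edges connecting its consecutive
vertices. -/
def connEdges (D : DG) (l : List ℕ) (e : ℕ × ℕ) : Prop :=
  ∃ p ∈ l.zip l.tail, e = connEdge D p.1 p.2

/-- A bifurcation: three distinct edges with a common vertex. -/
def Bifurcation (D : DG) (e1 e2 e3 : ℕ × ℕ) : Prop :=
  e1 ∈ D.edges ∧ e2 ∈ D.edges ∧ e3 ∈ D.edges ∧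
  e1 ≠ e2 ∧ e1 ≠ e3 ∧ e2 ≠ e3 ∧
  ∃ v, (v = e1.1 ∨ v = e1.2) ∧ (v = e2.1 ∨ v = e2.2) ∧ (v = e3.1 ∨ v = e3.2)

/-- A K-graph: a weakly connected, asemicyclic, `W`-`E`-functional oriented
graph with an inner vertex in which no bifurcation is transversal. -/
def IsKGraph (D : DG) : Prop :=
  D.IsOriented ∧ D.WeaklyConnected ∧ D.Asemicyclic ∧ D.WEFunctional ∧
  (∃ a, D.isInner a) ∧
  ∀ e1 e2 e3, Bifurcation D e1 e2 e3 →
    ¬ (Transversal D e1 ∧ Transversal D e2 ∧ Transversal D e3)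

/-- A Q-graph: a weakly connected, asemicyclic, `W`-`E`-functional oriented
graph with an inner vertex. -/
def IsQGraph (D : DG) : Prop :=
  D.IsOriented ∧ D.WeaklyConnected ∧ D.Asemicyclic ∧ D.WEFunctional ∧
  ∃ a, D.isInner a


section Aux

/-- Bundle of the hypotheses available at a cut node of a construction. -/
structure CutCtx (DW DE : DG) (eW eE : ℕ × ℕ) : Prop where
  disj : Disjoint DW.verts DE.verts
  orW : DW.IsOriented
  orE : DE.IsOriented
  fW : DW.funcEEdge eW
  fE : DE.funcWEdge eE

variable {DW DE : DG} {eW eE : ℕ × ℕ}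

private lemma pfst {p q : ℕ × ℕ} (h : p = q) : p.1 = q.1 := congrArg Prod.fst h
private lemma psnd {p q : ℕ × ℕ} (h : p = q) : p.2 = q.2 := congrArg Prod.snd h

lemma mem_cut_edges {g : ℕ × ℕ} :
    g ∈ (DG.cut DW DE eW eE).edges ↔
      g = (eW.1, eE.2) ∨ (g ≠ eW ∧ g ∈ DW.edges) ∨ (g ≠ eE ∧ g ∈ DE.edges) := by
  simp [DG.cut]

lemma mem_cut_verts {v : ℕ} :
    v ∈ (DG.cut DW DE eW eE).verts ↔
      (v ∈ DW.verts ∨ v ∈ DE.verts) ∧ v ≠ eW.2 ∧ v ≠ eE.1 := by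
  simp [DG.cut, not_or, and_assoc]

namespace CutCtx

variable (hC : CutCtx DW DE eW eE)
include hC

lemma notE {v : ℕ} (hv : v ∈ DW.verts) : v ∉ DE.verts :=
  Finset.disjoint_left.mp hC.disj hv

lemma eW_mem : eW ∈ DW.edges := hC.fW.1.1
lemma eE_mem : eE ∈ DE.edges := hC.fE.1.1
lemma eW1_mem : eW.1 ∈ DW.verts := (hC.orW.1 eW hC.eW_mem).1
lemma eW2_mem : eW.2 ∈ DW.verts := (hC.orW.1 eW hC.eW_mem).2
lemma eE1_mem : eE.1 ∈ DE.verts := (hC.orE.1 eE hC.eE_mem).1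
lemma eE2_mem : eE.2 ∈ DE.verts := (hC.orE.1 eE hC.eE_mem).2
lemma eW_ne : eW.1 ≠ eW.2 := hC.orW.2.1 eW hC.eW_mem
lemma eE_ne : eE.1 ≠ eE.2 := hC.orE.2.1 eE hC.eE_mem
/-- no edge of `DW` leaves `eW.2`. -/
lemma b_no_out : ∀ z, (eW.2, z) ∉ DW.edges := hC.fW.1.2.2
/-- every edge of `DW` into `eW.2` is `eW`. -/
lemma b_in_unique : ∀ c, (c, eW.2) ∈ DW.edges → c = eW.1 := hC.fW.2
/-- no edge of `DE` enters `eE.1`. -/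
lemma c_no_in : ∀ z, (z, eE.1) ∉ DE.edges := hC.fE.1.2.2
/-- every edge of `DE` out of `eE.1` is `eE`. -/
lemma c_out_unique : ∀ c, (eE.1, c) ∈ DE.edges → c = eE.2 := hC.fE.2

/-- endpoints of edges of `DW` other than `eW` avoid the removed vertices. -/
lemma edgeW_avoid {g : ℕ × ℕ} (hg : g ∈ DW.edges) (hne : g ≠ eW) :
    g.1 ≠ eW.2 ∧ g.2 ≠ eW.2 ∧ g.1 ≠ eE.1 ∧ g.2 ≠ eE.1 := by
  obtain ⟨h1, h2⟩ := hC.orW.1 g hg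
  refine ⟨?_, ?_, ?_, ?_⟩
  · intro h
    exact hC.b_no_out g.2 (by rw [← h]; exact hg)
  · intro h
    apply hne
    have := hC.b_in_unique g.1 (by rw [← h]; exact hg)
    exact Prod.ext this h
  · intro h; exact hC.notE h1 (by rw [h]; exact hC.eE1_mem)
  · intro h; exact hC.notE h2 (by rw [h]; exact hC.eE1_mem)

lemma edgeE_avoid' {g : ℕ × ℕ} (hg : g ∈ DE.edges) (hne : g ≠ eE) :
    g.1 ≠ eE.1 ∧ g.2 ≠ eE.1 ∧ g.1 ≠ eW.2 ∧ g.2 ≠ eW.2 := by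
  obtain ⟨h1, h2⟩ := hC.orE.1 g hg
  refine ⟨?_, ?_, ?_, ?_⟩
  · intro h
    apply hne
    have := hC.c_out_unique g.2 (by rw [← h]; exact hg)
    exact Prod.ext h this
  · intro h
    exact hC.c_no_in g.1 (by rw [← h]; exact hg)
  · intro h
    exact hC.notE (show g.1 ∈ DW.verts by rw [h]; exact hC.eW2_mem) h1
  · intro h
    exact hC.notE (show g.2 ∈ DW.verts by rw [h]; exact hC.eW2_mem) h2

/-- Each edge of the cut lies within `DW`, within `DE`, or is the new edge. -/
lemma cut_edge_side {x y : ℕ} (h : (x, y) ∈ (DG.cut DW DE eW eE).edges) :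
    ((x, y) ∈ DW.edges ∨ (x ∈ DW.verts ∧ y ∈ DE.verts)) ∨ (x, y) ∈ DE.edges := by
  rcases mem_cut_edges.mp h with h | ⟨_, h⟩ | ⟨_, h⟩
  · have h1 : x = eW.1 := by have := pfst h; exact this
    have h2 : y = eE.2 := by have := psnd h; exact this
    exact Or.inl (Or.inr ⟨by rw [h1]; exact hC.eW1_mem, by rw [h2]; exact hC.eE2_mem⟩)
  · exact Or.inl (Or.inl h)
  · exact Or.inr h

lemma cut_oriented : (DG.cut DW DE eW eE).IsOriented := by
  have hne1 : eW.1 ≠ eE.1 := fun h => hC.notE hC.eW1_mem (show eW.1 ∈ DE.verts by rw [h]; exact hC.eE1_mem)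
  refine ⟨?_, ?_, ?_, ?_⟩
  · intro g hg
    rcases mem_cut_edges.mp hg with h | ⟨hne, hg'⟩ | ⟨hne, hg'⟩
    · subst h
      refine ⟨mem_cut_verts.mpr ⟨Or.inl hC.eW1_mem, hC.eW_ne, hne1⟩,
        mem_cut_verts.mpr ⟨Or.inr hC.eE2_mem, ?_, fun h => hC.eE_ne h.symm⟩⟩
      intro h
      exact hC.notE hC.eW2_mem (by rw [← h]; exact hC.eE2_mem)
    · obtain ⟨a1, a2, a3, a4⟩ := hC.edgeW_avoid hg' hne
      obtain ⟨m1, m2⟩ := hC.orW.1 g hg'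
      exact ⟨mem_cut_verts.mpr ⟨Or.inl m1, a1, a3⟩, mem_cut_verts.mpr ⟨Or.inl m2, a2, a4⟩⟩
    · obtain ⟨a1, a2, a3, a4⟩ := hC.edgeE_avoid' hg' hne
      obtain ⟨m1, m2⟩ := hC.orE.1 g hg'
      exact ⟨mem_cut_verts.mpr ⟨Or.inr m1, a3, a1⟩, mem_cut_verts.mpr ⟨Or.inr m2, a4, a2⟩⟩
  · intro g hg
    rcases mem_cut_edges.mp hg with h | ⟨hne, hg'⟩ | ⟨hne, hg'⟩
    · intro hgg
      apply hC.notE hC.eW1_mem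
      have h1 : g.1 = eW.1 := by have := pfst h; exact this
      have h2 : g.2 = eE.2 := by have := psnd h; exact this
      rw [← h1, hgg, h2]
      exact hC.eE2_mem
    · exact hC.orW.2.1 g hg'
    · exact hC.orE.2.1 g hg'
  · intro a b hab hba
    rcases hC.cut_edge_side hab with (h1 | ⟨ha, hb⟩) | h1 <;>
      rcases hC.cut_edge_side hba with (h2 | ⟨hb', ha'⟩) | h2
    · exact hC.orW.2.2.1 a b h1 h2
    · exact hC.notE (hC.orW.1 _ h1).1 ha'
    · exact hC.notE (hC.orW.1 _ h1).1 (hC.orE.1 _ h2).2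
    · exact hC.notE (hC.orW.1 _ h2).1 hb
    · exact hC.notE ha ha'
    · exact hC.notE ha (hC.orE.1 _ h2).2
    · exact hC.notE (hC.orW.1 _ h2).2 (hC.orE.1 _ h1).1
    · exact hC.notE hb' (hC.orE.1 _ h1).2
    · exact hC.orE.2.2.1 a b h1 h2
  · exact ⟨eW.1, mem_cut_verts.mpr ⟨Or.inl hC.eW1_mem, hC.eW_ne, hne1⟩⟩

/-- Classification of `W`-edges of a cut. -/
lemma isWEdge_cases {g : ℕ × ℕ} (hg : (DG.cut DW DE eW eE).isWEdge g) :
    (g = (eW.1, eE.2) ∧ DW.isWVert eW.1) ∨ (g ≠ eW ∧ DW.isWEdge g) ∨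
      (g ≠ eE ∧ DE.isWEdge g) := by
  obtain ⟨hgmem, hv, hnin⟩ := hg
  rcases mem_cut_edges.mp hgmem with h | ⟨hne, hg'⟩ | ⟨hne, hg'⟩
  · left
    refine ⟨h, hC.eW1_mem, ?_⟩
    intro z hz
    have h1 : g.1 = eW.1 := by have := pfst h; exact this
    by_cases hzw : (z, eW.1) = eW
    · exact hC.eW_ne (show eW.1 = eW.2 by have := psnd hzw; exact this)
    · exact hnin z (mem_cut_edges.mpr (Or.inr (Or.inl ⟨by rw [h1]; exact hzw, by rw [h1]; exact hz⟩)))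
  · right; left
    refine ⟨hne, hg', (hC.orW.1 g hg').1, ?_⟩
    intro z hz
    by_cases hzw : (z, g.1) = eW
    · exact (hC.edgeW_avoid hg' hne).1 (show g.1 = eW.2 by have := psnd hzw; exact this)
    · exact hnin z (mem_cut_edges.mpr (Or.inr (Or.inl ⟨hzw, hz⟩)))
  · right; right
    refine ⟨hne, hg', (hC.orE.1 g hg').1, ?_⟩
    intro z hz
    by_cases hze : (z, g.1) = eE
    · have h1 : g.1 = eE.2 := by have := psnd hze; exact this
      exact hnin eW.1 (mem_cut_edges.mpr (Or.inl (by rw [h1])))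
    · exact hnin z (mem_cut_edges.mpr (Or.inr (Or.inr ⟨hze, hz⟩)))

/-- Classification of `E`-edges of a cut. -/
lemma isEEdge_cases {g : ℕ × ℕ} (hg : (DG.cut DW DE eW eE).isEEdge g) :
    (g = (eW.1, eE.2) ∧ DE.isEVert eE.2) ∨ (g ≠ eE ∧ DE.isEEdge g) ∨
      (g ≠ eW ∧ DW.isEEdge g) := by
  obtain ⟨hgmem, hv, hnout⟩ := hg
  rcases mem_cut_edges.mp hgmem with h | ⟨hne, hg'⟩ | ⟨hne, hg'⟩
  · left
    refine ⟨h, hC.eE2_mem, ?_⟩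
    intro z hz
    have h2 : g.2 = eE.2 := by have := psnd h; exact this
    by_cases hze : (eE.2, z) = eE
    · exact hC.eE_ne (show eE.2 = eE.1 by have := pfst hze; exact this).symm
    · exact hnout z (mem_cut_edges.mpr (Or.inr (Or.inr ⟨by rw [h2]; exact hze, by rw [h2]; exact hz⟩)))
  · right; right
    refine ⟨hne, hg', (hC.orW.1 g hg').2, ?_⟩
    intro z hz
    by_cases hzw : (g.2, z) = eW
    · have h1 : g.2 = eW.1 := by have := pfst hzw; exact this
      exact hnout eE.2 (mem_cut_edges.mpr (Or.inl (by rw [h1])))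
    · exact hnout z (mem_cut_edges.mpr (Or.inr (Or.inl ⟨hzw, hz⟩)))
  · right; left
    refine ⟨hne, hg', (hC.orE.1 g hg').2, ?_⟩
    intro z hz
    by_cases hze : (g.2, z) = eE
    · exact (hC.edgeE_avoid' hg' hne).2.1 (show g.2 = eE.1 by have := pfst hze; exact this)
    · exact hnout z (mem_cut_edges.mpr (Or.inr (Or.inr ⟨hze, hz⟩)))

/-- A `W`-edge of `DW` ending in an inner vertex persists in the cut. -/
lemma persist_W_W {g : ℕ × ℕ} (hg : DW.isWEdge g) (hi : DW.isInner g.2) :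
    (DG.cut DW DE eW eE).isWEdge g ∧ (DG.cut DW DE eW eE).isInner g.2 := by
  obtain ⟨hgm, hv1, hnin⟩ := hg
  obtain ⟨hv2, ⟨z1, hz1⟩, ⟨z2, hz2⟩⟩ := hi
  have hne : g ≠ eW := by
    intro h
    exact hC.b_no_out z2 (by rw [← (show g.2 = eW.2 by have := psnd h; exact this)]; exact hz2)
  obtain ⟨a1, a2, a3, a4⟩ := hC.edgeW_avoid hgm hne
  refine ⟨⟨mem_cut_edges.mpr (Or.inr (Or.inl ⟨hne, hgm⟩)),
      mem_cut_verts.mpr ⟨Or.inl hv1, a1, a3⟩, ?_⟩,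
    mem_cut_verts.mpr ⟨Or.inl hv2, a2, a4⟩, ⟨z1, ?_⟩, ?_⟩
  · intro z hz
    rcases mem_cut_edges.mp hz with h | ⟨hne', hg'⟩ | ⟨hne', hg'⟩
    · exact hC.notE hv1 (by rw [(show g.1 = eE.2 by have := psnd h; exact this)]; exact hC.eE2_mem)
    · exact hnin z hg'
    · exact hC.notE hv1 (hC.orE.1 _ hg').2
  · refine mem_cut_edges.mpr (Or.inr (Or.inl ⟨?_, hz1⟩))
    intro h
    exact a2 (show g.2 = eW.2 by have := psnd h; exact this)
  · by_cases hzw : (g.2, z2) = eW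
    · refine ⟨eE.2, mem_cut_edges.mpr (Or.inl ?_)⟩
      rw [(show g.2 = eW.1 by have := pfst hzw; exact this)]
    · exact ⟨z2, mem_cut_edges.mpr (Or.inr (Or.inl ⟨hzw, hz2⟩))⟩

/-- A `W`-edge of `DE` other than `eE` ending in an inner vertex persists. -/
lemma persist_W_E {g : ℕ × ℕ} (hne : g ≠ eE) (hg : DE.isWEdge g) (hi : DE.isInner g.2) :
    (DG.cut DW DE eW eE).isWEdge g ∧ (DG.cut DW DE eW eE).isInner g.2 := by
  obtain ⟨hgm, hv1, hnin⟩ := hg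
  obtain ⟨hv2, ⟨z1, hz1⟩, ⟨z2, hz2⟩⟩ := hi
  obtain ⟨a1, a2, a3, a4⟩ := hC.edgeE_avoid' hgm hne
  have hd : g.1 ≠ eE.2 := by
    intro h
    exact hnin eE.1 (by rw [h]; exact hC.eE_mem)
  refine ⟨⟨mem_cut_edges.mpr (Or.inr (Or.inr ⟨hne, hgm⟩)),
      mem_cut_verts.mpr ⟨Or.inr hv1, a3, a1⟩, ?_⟩,
    mem_cut_verts.mpr ⟨Or.inr hv2, a4, a2⟩, ?_, ?_⟩
  · intro z hz
    rcases mem_cut_edges.mp hz with h | ⟨hne', hg'⟩ | ⟨hne', hg'⟩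
    · exact hd (show g.1 = eE.2 by have := psnd h; exact this)
    · exact hC.notE (hC.orW.1 _ hg').2 hv1
    · exact hnin z hg'
  · by_cases hze : (z1, g.2) = eE
    · refine ⟨eW.1, mem_cut_edges.mpr (Or.inl ?_)⟩
      rw [(show g.2 = eE.2 by have := psnd hze; exact this)]
    · exact ⟨z1, mem_cut_edges.mpr (Or.inr (Or.inr ⟨hze, hz1⟩))⟩
  · refine ⟨z2, mem_cut_edges.mpr (Or.inr (Or.inr ⟨?_, hz2⟩))⟩
    intro h
    exact a2 (show g.2 = eE.1 by have := pfst h; exact this)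

/-- An `E`-edge of `DE` beginning in an inner vertex persists in the cut. -/
lemma persist_E_E {g : ℕ × ℕ} (hg : DE.isEEdge g) (hi : DE.isInner g.1) :
    (DG.cut DW DE eW eE).isEEdge g ∧ (DG.cut DW DE eW eE).isInner g.1 := by
  obtain ⟨hgm, hv2, hnout⟩ := hg
  obtain ⟨hv1, ⟨z1, hz1⟩, ⟨z2, hz2⟩⟩ := hi
  have hne : g ≠ eE := by
    intro h
    exact hC.c_no_in z1 (by rw [← (show g.1 = eE.1 by have := pfst h; exact this)]; exact hz1)
  obtain ⟨a1, a2, a3, a4⟩ := hC.edgeE_avoid' hgm hne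
  refine ⟨⟨mem_cut_edges.mpr (Or.inr (Or.inr ⟨hne, hgm⟩)),
      mem_cut_verts.mpr ⟨Or.inr hv2, a4, a2⟩, ?_⟩,
    mem_cut_verts.mpr ⟨Or.inr hv1, a3, a1⟩, ?_, ⟨z2, ?_⟩⟩
  · intro z hz
    rcases mem_cut_edges.mp hz with h | ⟨hne', hg'⟩ | ⟨hne', hg'⟩
    · exact hC.notE (show g.2 ∈ DW.verts by
        rw [(show g.2 = eW.1 by have := pfst h; exact this)]; exact hC.eW1_mem) hv2
    · exact hC.notE (hC.orW.1 _ hg').1 hv2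
    · exact hnout z hg'
  · by_cases hze : (z1, g.1) = eE
    · refine ⟨eW.1, mem_cut_edges.mpr (Or.inl ?_)⟩
      rw [(show g.1 = eE.2 by have := psnd hze; exact this)]
    · exact ⟨z1, mem_cut_edges.mpr (Or.inr (Or.inr ⟨hze, hz1⟩))⟩
  · refine mem_cut_edges.mpr (Or.inr (Or.inr ⟨?_, hz2⟩))
    intro h
    exact a1 (show g.1 = eE.1 by have := pfst h; exact this)

/-- An `E`-edge of `DW` other than `eW` beginning in an inner vertex persists. -/
lemma persist_E_W {g : ℕ × ℕ} (hne : g ≠ eW) (hg : DW.isEEdge g) (hi : DW.isInner g.1) :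
    (DG.cut DW DE eW eE).isEEdge g ∧ (DG.cut DW DE eW eE).isInner g.1 := by
  obtain ⟨hgm, hv2, hnout⟩ := hg
  obtain ⟨hv1, ⟨z1, hz1⟩, ⟨z2, hz2⟩⟩ := hi
  obtain ⟨a1, a2, a3, a4⟩ := hC.edgeW_avoid hgm hne
  have hd : g.2 ≠ eW.1 := by
    intro h
    exact hnout eW.2 (by rw [h]; exact hC.eW_mem)
  refine ⟨⟨mem_cut_edges.mpr (Or.inr (Or.inl ⟨hne, hgm⟩)),
      mem_cut_verts.mpr ⟨Or.inl hv2, a2, a4⟩, ?_⟩,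
    mem_cut_verts.mpr ⟨Or.inl hv1, a1, a3⟩, ?_, ?_⟩
  · intro z hz
    rcases mem_cut_edges.mp hz with h | ⟨hne', hg'⟩ | ⟨hne', hg'⟩
    · exact hd (show g.2 = eW.1 by have := pfst h; exact this)
    · exact hnout z hg'
    · exact hC.notE hv2 (hC.orE.1 _ hg').1
  · refine ⟨z1, mem_cut_edges.mpr (Or.inr (Or.inl ⟨?_, hz1⟩))⟩
    intro h
    exact a1 (show g.1 = eW.2 by have := psnd h; exact this)
  · by_cases hzw : (g.1, z2) = eW
    · refine ⟨eE.2, mem_cut_edges.mpr (Or.inl ?_)⟩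
      rw [(show g.1 = eW.1 by have := pfst hzw; exact this)]
    · exact ⟨z2, mem_cut_edges.mpr (Or.inr (Or.inl ⟨hzw, hz2⟩))⟩

end CutCtx

end Aux

theorem rootGraph_oriented {G : CTree} (hG : IsConstruction G) :
    G.rootGraph.IsOriented := by
  induction hG with
  | leaf D ε h => exact h.1
  | node D ε eW eE GW GE hW hE hdisj heW heE hD hXYC hεW hεE ihW ihE =>
    subst hD
    exact CutCtx.cut_oriented ⟨hdisj, ihW, ihE, heW, heE⟩

theorem dist_spec {G : CTree} (hG : IsConstruction G) (Y : YDir) :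
    (G.rootGraph.isWEdge (G.dist Y XDir.W) ∧ G.rootGraph.isInner (G.dist Y XDir.W).2) ∧
    (G.rootGraph.isEEdge (G.dist Y XDir.E) ∧ G.rootGraph.isInner (G.dist Y XDir.E).1) := by
  induction hG with
  | leaf D ε h =>
    show (D.isWEdge (ε Y XDir.W) ∧ D.isInner (ε Y XDir.W).2) ∧
      (D.isEEdge (ε Y XDir.E) ∧ D.isInner (ε Y XDir.E).1)
    obtain ⟨hor, b, hb, hall, hjoin, ⟨a, ha⟩, ⟨c, hc⟩, hdist, _, _⟩ := h
    obtain ⟨hWmem, hW2, hEmem, hE1⟩ := hdist Y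
    have hirrW : (ε Y XDir.W).1 ≠ b := fun h => hor.2.1 _ hWmem (h.trans hW2.symm)
    have hirrE : (ε Y XDir.E).2 ≠ b := fun h => hor.2.1 _ hEmem (hE1.trans h.symm)
    refine ⟨⟨⟨hWmem, (hor.1 _ hWmem).1, ?_⟩, by rw [hW2]; exact ⟨hb, ⟨a, ha⟩, ⟨c, hc⟩⟩⟩,
      ⟨hEmem, (hor.1 _ hEmem).2, ?_⟩, by rw [hE1]; exact ⟨hb, ⟨a, ha⟩, ⟨c, hc⟩⟩⟩
    · intro z hz
      rcases hall _ hz with h1 | h2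
      · refine hor.2.2.1 (ε Y XDir.W).1 b ?_ ?_
        · rw [← hW2]; exact hWmem
        · rw [← h1]; exact hz
      · exact hirrW h2
    · intro z hz
      rcases hall _ hz with h1 | h2
      · exact hirrE h1
      · refine hor.2.2.1 b (ε Y XDir.E).2 ?_ ?_
        · rw [← hE1]; exact hEmem
        · rw [← h2]; exact hz
  | node D ε eW eE GW GE hW hE hdisj heW heE hD hXYC hεW hεE ihW ihE =>
    subst hD
    have hC : CutCtx GW.rootGraph GE.rootGraph eW eE :=
      ⟨hdisj, rootGraph_oriented hW, rootGraph_oriented hE, heW, heE⟩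
    constructor
    · show (DG.cut GW.rootGraph GE.rootGraph eW eE).isWEdge (ε Y XDir.W) ∧
        (DG.cut GW.rootGraph GE.rootGraph eW eE).isInner (ε Y XDir.W).2
      rw [hεW Y]
      split_ifs with hc
      · exact hC.persist_W_W ihW.1.1 ihW.1.2
      · exact hC.persist_W_E (fun h => hc h.symm) ihE.1.1 ihE.1.2
    · show (DG.cut GW.rootGraph GE.rootGraph eW eE).isEEdge (ε Y XDir.E) ∧
        (DG.cut GW.rootGraph GE.rootGraph eW eE).isInner (ε Y XDir.E).1
      rw [hεE Y]
      split_ifs with hc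
      · exact hC.persist_E_E ihE.2.1 ihE.2.2
      · exact hC.persist_E_W (fun h => hc h.symm) ihW.2.1 ihW.2.2

/-- (XYG) For every construction `G` with root graph `D` and every
`X ∈ {W, E}`: if `D` has at least two `X`-edges, then `NX(G) ≠ SX(G)`. -/
theorem dist_ne_of_two_X_edges (G : CTree) (hG : IsConstruction G) (X : XDir)
    (h2 : ∃ d₁ d₂ : ℕ × ℕ, d₁ ≠ d₂ ∧
      G.rootGraph.isXEdge X d₁ ∧ G.rootGraph.isXEdge X d₂) :
    G.dist YDir.N X ≠ G.dist YDir.S X := by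
  induction hG generalizing X with
  | leaf D ε h =>
    obtain ⟨d₁, d₂, hne, hd₁, hd₂⟩ := h2
    obtain ⟨hor, b, hb, hall, hjoin, ⟨a, ha⟩, ⟨c, hc⟩, hdist, hNW, hNE⟩ := h
    cases X with
    | W =>
      have key : ∀ d : ℕ × ℕ, D.isWEdge d → d.2 = b := by
        intro d hd
        rcases hall d hd.1 with h1 | h2
        · exact absurd (h1 ▸ ha) (hd.2.2 a)
        · exact h2
      have hw₁ : D.isWEdge d₁ := hd₁
      have hw₂ : D.isWEdge d₂ := hd₂
      apply hNW
      refine Finset.one_lt_card.mpr ⟨d₁, ?_, d₂, ?_, hne⟩ <;>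
        simp [Finset.mem_filter, hw₁.1, hw₂.1, key d₁ hw₁, key d₂ hw₂]
    | E =>
      have key : ∀ d : ℕ × ℕ, D.isEEdge d → d.1 = b := by
        intro d hd
        rcases hall d hd.1 with h1 | h2
        · exact h1
        · exact absurd (h2 ▸ hc) (hd.2.2 c)
      have hw₁ : D.isEEdge d₁ := hd₁
      have hw₂ : D.isEEdge d₂ := hd₂
      apply hNE
      refine Finset.one_lt_card.mpr ⟨d₁, ?_, d₂, ?_, hne⟩ <;>
        simp [Finset.mem_filter, hw₁.1, hw₂.1, key d₁ hw₁, key d₂ hw₂]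
  | node D ε eW eE GW GE hW hE hdisj heW heE hD hXYC hεW hεE ihW ihE =>
    subst hD
    have hC : CutCtx GW.rootGraph GE.rootGraph eW eE :=
      ⟨hdisj, rootGraph_oriented hW, rootGraph_oriented hE, heW, heE⟩
    obtain ⟨d₁, d₂, hne, hd₁, hd₂⟩ := h2
    cases X with
    | W =>
      show ε YDir.N XDir.W ≠ ε YDir.S XDir.W
      rw [hεW YDir.N, hεW YDir.S]
      by_cases c₁ : eE = GE.dist YDir.N XDir.W <;>
        by_cases c₂ : eE = GE.dist YDir.S XDir.W <;>
        [rw [if_pos c₁, if_pos c₂]; rw [if_pos c₁, if_neg c₂];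
         rw [if_neg c₁, if_pos c₂]; rw [if_neg c₁, if_neg c₂]]
      · -- both from GW; need two W-edges of GW
        have hone : ∀ g, GE.rootGraph.isWEdge g → g = eE := by
          intro g hg
          by_contra hg'
          exact ihE XDir.W ⟨g, eE, hg', hg, hC.fE.1⟩ (c₁.symm.trans c₂)
        have toW : ∀ g : ℕ × ℕ, (DG.cut GW.rootGraph GE.rootGraph eW eE).isWEdge g →
            (g = (eW.1, eE.2) ∧ GW.rootGraph.isWEdge eW) ∨
              (g ≠ eW ∧ GW.rootGraph.isWEdge g) := by
          intro g hg
          rcases hC.isWEdge_cases hg with ⟨h1, h2⟩ | h | ⟨h1, h2⟩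
          · exact Or.inl ⟨h1, hC.eW_mem, h2⟩
          · exact Or.inr h
          · exact absurd (hone g h2) h1
        apply ihW XDir.W
        rcases toW d₁ hd₁ with ⟨e1, w1⟩ | ⟨e1, w1⟩ <;> rcases toW d₂ hd₂ with ⟨e2, w2⟩ | ⟨e2, w2⟩
        · exact absurd (e1.trans e2.symm) hne
        · exact ⟨eW, d₂, fun h => e2 h.symm, w1, w2⟩
        · exact ⟨d₁, eW, e1, w1, w2⟩
        · exact ⟨d₁, d₂, hne, w1, w2⟩
      · -- N from GW, S from GE : distinct by disjointness
        intro h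
        have m1 : (GW.dist YDir.N XDir.W).1 ∈ GW.rootGraph.verts := (dist_spec hW YDir.N).1.1.2.1
        have m2 : (GE.dist YDir.S XDir.W).1 ∈ GE.rootGraph.verts := (dist_spec hE YDir.S).1.1.2.1
        exact hC.notE m1 (h ▸ m2)
      · intro h
        have m1 : (GE.dist YDir.N XDir.W).1 ∈ GE.rootGraph.verts := (dist_spec hE YDir.N).1.1.2.1
        have m2 : (GW.dist YDir.S XDir.W).1 ∈ GW.rootGraph.verts := (dist_spec hW YDir.S).1.1.2.1
        exact hC.notE m2 (by rw [← h]; exact m1)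
      · -- both from GE : eE and dist N W are two distinct W-edges of GE
        exact ihE XDir.W ⟨eE, GE.dist YDir.N XDir.W, c₁, hC.fE.1, (dist_spec hE YDir.N).1.1⟩
    | E =>
      show ε YDir.N XDir.E ≠ ε YDir.S XDir.E
      rw [hεE YDir.N, hεE YDir.S]
      by_cases c₁ : eW = GW.dist YDir.N XDir.E <;>
        by_cases c₂ : eW = GW.dist YDir.S XDir.E <;>
        [rw [if_pos c₁, if_pos c₂]; rw [if_pos c₁, if_neg c₂];
         rw [if_neg c₁, if_pos c₂]; rw [if_neg c₁, if_neg c₂]]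
      · have hone : ∀ g, GW.rootGraph.isEEdge g → g = eW := by
          intro g hg
          by_contra hg'
          exact ihW XDir.E ⟨g, eW, hg', hg, hC.fW.1⟩ (c₁.symm.trans c₂)
        have toE : ∀ g : ℕ × ℕ, (DG.cut GW.rootGraph GE.rootGraph eW eE).isEEdge g →
            (g = (eW.1, eE.2) ∧ GE.rootGraph.isEEdge eE) ∨
              (g ≠ eE ∧ GE.rootGraph.isEEdge g) := by
          intro g hg
          rcases hC.isEEdge_cases hg with ⟨h1, h2⟩ | h | ⟨h1, h2⟩
          · exact Or.inl ⟨h1, hC.eE_mem, h2⟩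
          · exact Or.inr h
          · exact absurd (hone g h2) h1
        apply ihE XDir.E
        rcases toE d₁ hd₁ with ⟨e1, w1⟩ | ⟨e1, w1⟩ <;> rcases toE d₂ hd₂ with ⟨e2, w2⟩ | ⟨e2, w2⟩
        · exact absurd (e1.trans e2.symm) hne
        · exact ⟨eE, d₂, fun h => e2 h.symm, w1, w2⟩
        · exact ⟨d₁, eE, e1, w1, w2⟩
        · exact ⟨d₁, d₂, hne, w1, w2⟩
      · intro h
        have m1 : (GE.dist YDir.N XDir.E).2 ∈ GE.rootGraph.verts := (dist_spec hE YDir.N).2.1.2.1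
        have m2 : (GW.dist YDir.S XDir.E).2 ∈ GW.rootGraph.verts := (dist_spec hW YDir.S).2.1.2.1
        exact hC.notE m2 (h.symm ▸ m1)
      · intro h
        have m1 : (GW.dist YDir.N XDir.E).2 ∈ GW.rootGraph.verts := (dist_spec hW YDir.N).2.1.2.1
        have m2 : (GE.dist YDir.S XDir.E).2 ∈ GE.rootGraph.verts := (dist_spec hE YDir.S).2.1.2.1
        exact hC.notE m1 (h ▸ m2)
      · exact ihW XDir.E ⟨eW, GW.dist YDir.N XDir.E, c₁, hC.fW.1, (dist_spec hW YDir.N).2.1⟩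

end PluralCuts
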